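/- arXiv:2303.17425 — 4 statements merged into one kernel-verified Lean document; each statement's English description precedes it below -/
import Mathlib

section
/- Let {P_θ : θ ∈ 𝕋} be a family of probability measures on a measurable space 𝕏 and η : 𝕏 × 𝕋 → [0,1] with x ↦ η(x,θ) measurable for each θ. Define π_x(θ) = P_θ({x' : η(x',θ) ≤ η(x,θ)}) and the possibility measure Π̄_x(A) = sup_{θ ∈ A} π_x(θ) for A ⊆ 𝕋. Then for every θ ∈ 𝕋 and α ∈ [0,1], P_θ({x : there exists A ⊆ 𝕋 with θ ∈ A and Π̄_x(A) ≤ α}) ≤ α. -/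
/-!
The event `∃ A ∋ θ, sup_{ϑ ∈ A} π_x(ϑ) ≤ α` is just `π_x(θ) ≤ α` (take `A = {θ}`), so the claim
is the superuniformity of the p-value `x ↦ μ {y | f y ≤ f x}`. That event is `f ⁻¹' D` for the
lower set `D = {t | μ {f ≤ t} ≤ α}`, an increasing union of the sets `{f ≤ t}`, `t ∈ D`; each has
measure `≤ α`, and since `D` has countable cofinality, continuity from below applies.
-/

open MeasureTheory Set
open scoped ENNReal

section Superuniform

variable {X β : Type*} [MeasurableSpace X] [LinearOrder β] [TopologicalSpace β]
  [OrderTopology β] [SecondCountableTopology β]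

theorem measure_preimage_le_of_isLowerSet (μ : Measure X) (f : X → β) {D : Set β}
    (hD : IsLowerSet D) {α : ℝ≥0∞} (h : ∀ t ∈ D, μ {x | f x ≤ t} ≤ α) : μ (f ⁻¹' D) ≤ α := by
  -- `D` is order-connected, so its subspace topology is the order topology and `atTop` on `D`
  -- is countably generated.
  have := hD.ordConnected
  have hunion : f ⁻¹' D = ⋃ t : D, {x | f x ≤ t} :=
    Set.ext fun x => ⟨fun hx => mem_iUnion.2 ⟨⟨f x, hx⟩, le_rfl⟩,
      fun hx => let ⟨t, ht⟩ := mem_iUnion.1 hx; hD ht t.2⟩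
  have hmono : Monotone fun t : D => {x | f x ≤ t} := fun _ _ hst _ hx => le_trans hx hst
  rw [hunion, hmono.measure_iUnion]
  exact iSup_le fun t => h t t.2

theorem measure_setOf_measure_sublevel_le (μ : Measure X) (f : X → β) (α : ℝ≥0∞) :
    μ {x | μ {y | f y ≤ f x} ≤ α} ≤ α :=
  measure_preimage_le_of_isLowerSet μ f (D := {t | μ {y | f y ≤ t} ≤ α})
    (fun _ _ hst hs => (measure_mono fun _ hy => le_trans hy hst).trans hs) fun _ ht => ht

end Superuniform

theorem exists_mem_biSup_le_iff {T L : Type*} [CompleteLattice L] (g : T → L) (θ : T) (a : L) :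
    (∃ A : Set T, θ ∈ A ∧ ⨆ ϑ ∈ A, g ϑ ≤ a) ↔ g θ ≤ a :=
  ⟨fun ⟨_, hθ, hA⟩ => (le_biSup g hθ).trans hA, fun h => ⟨{θ}, rfl, by simpa using h⟩⟩

theorem im_validity_uniform_general {X T : Type*} [MeasurableSpace X]
    (P : T → Measure X)
    (η : X → T → ℝ) :
    ∀ θ : T, ∀ α : ℝ≥0∞, α ≤ 1 →
      P θ {x | ∃ A : Set T, θ ∈ A ∧
        (⨆ ϑ ∈ A, P ϑ {x' | η x' ϑ ≤ η x ϑ}) ≤ α} ≤ α := by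
  intro θ α _
  simp_rw [exists_mem_biSup_le_iff (fun ϑ => P ϑ {x' | η x' ϑ ≤ η _ ϑ})]
  exact measure_setOf_measure_sublevel_le (P θ) (fun x => η x θ) α

/-- Uniform-over-true-hypotheses validity: the `P_θ`-probability that the
possibility measure `Π̄_x(A) = sup_{ϑ∈A} π_x(ϑ)` assigns value `≤ α` to some
hypothesis `A` containing the true `θ` is at most `α`. -/
theorem im_validity_uniform {X T : Type*} [MeasurableSpace X]
    (P : T → Measure X) (hP : ∀ θ, IsProbabilityMeasure (P θ))
    (η : X → T → ℝ) (hη : ∀ x θ, η x θ ∈ Set.Icc (0 : ℝ) 1)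
    (hmeas : ∀ θ, Measurable fun x => η x θ) :
    ∀ θ : T, ∀ α : ℝ≥0∞, α ≤ 1 →
      P θ {x | ∃ A : Set T, θ ∈ A ∧
        (⨆ ϑ ∈ A, P ϑ {x' | η x' ϑ ≤ η x ϑ}) ≤ α} ≤ α :=
  im_validity_uniform_general P η
end

section
/- Let {P_θ : θ ∈ 𝕋} be a family of probability measures on a measurable space 𝕏, η : 𝕏 × 𝕋 → [0,1] with x ↦ η(x,θ) measurable for each θ, and π_x(θ) = P_θ({x' : η(x',θ) ≤ η(x,θ)}). For α ∈ [0,1] define the set C_α(x) = {θ ∈ 𝕋 : π_x(θ) > α}. Then for every θ ∈ 𝕋, P_θ({x : θ ∈ C_α(x)}) ≥ 1 − α, i.e., the coverage probability of C_α is bounded below by 1 − α. -/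
open MeasureTheory Set
open scoped ENNReal

/-!
Fix `θ` and write `f = η(·, θ)`, `μ = P_θ`. The points `x` outside the confidence set are those
with `μ {f ≤ f x} ≤ α`; they are covered by the chain of sublevel sets `{f ≤ t}`, `t` ranging over
the lower closure `D` of their `f`-values, and each of these sets has measure at most `α`.
Since `D` is an order-connected subset of `ℝ`, `atTop` on `D` is countably generated, so continuity
from below bounds the measure of the whole union by `α`.
-/

theorem measure_setOf_measure_preimage_Iic_le {X β : Type*} [MeasurableSpace X]
    [ConditionallyCompleteLinearOrder β] [TopologicalSpace β] [OrderTopology β]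
    [SecondCountableTopology β] (μ : Measure X) (f : X → β) (α : ℝ≥0∞) :
    μ {x | μ (f ⁻¹' Iic (f x)) ≤ α} ≤ α := by
  set A := {x | μ (f ⁻¹' Iic (f x)) ≤ α}
  set D : Set β := ↑(lowerClosure (f '' A))
  have : OrdConnected D := (lowerClosure (f '' A)).lower.ordConnected
  have hmono : Monotone fun t : D => f ⁻¹' Iic (t : β) := fun _ _ hst _ hy => hy.trans hst
  calc μ A ≤ μ (⋃ t : D, f ⁻¹' Iic (t : β)) := measure_mono fun x hx =>
        mem_iUnion.2 ⟨⟨f x, subset_lowerClosure (mem_image_of_mem f hx)⟩, le_rfl⟩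
    _ = ⨆ t : D, μ (f ⁻¹' Iic (t : β)) := hmono.measure_iUnion
    _ ≤ α := iSup_le fun ⟨t, ht⟩ => by
        obtain ⟨_, ⟨a, ha, rfl⟩, hta⟩ := ht
        exact (measure_mono fun y hy => hy.trans hta).trans ha

theorem one_sub_le_measure_setOf_lt_measure_preimage_Iic {X β : Type*} [MeasurableSpace X]
    [ConditionallyCompleteLinearOrder β] [TopologicalSpace β] [OrderTopology β]
    [SecondCountableTopology β] (μ : Measure X) [IsProbabilityMeasure μ] (f : X → β)
    (α : ℝ≥0∞) : 1 - α ≤ μ {x | α < μ (f ⁻¹' Iic (f x))} := by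
  set A := {x | μ (f ⁻¹' Iic (f x)) ≤ α}
  have hcompl : {x | α < μ (f ⁻¹' Iic (f x))} = Aᶜ := by
    ext x
    simp [A, not_le]
  rw [hcompl, tsub_le_iff_right]
  calc (1 : ℝ≥0∞) = μ (Aᶜ ∪ A) := by rw [compl_union_self, measure_univ]
    _ ≤ μ Aᶜ + μ A := measure_union_le _ _
    _ ≤ μ Aᶜ + α := add_le_add_right (measure_setOf_measure_preimage_Iic_le μ f α) _

theorem im_confidence_coverage_general {X T : Type*} [MeasurableSpace X]
    (P : T → Measure X) (hP : ∀ θ, IsProbabilityMeasure (P θ))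
    (η : X → T → ℝ)
    (α : ℝ≥0∞) :
    ∀ θ : T,
      1 - α ≤ P θ {x | θ ∈ {ϑ : T | α < P ϑ {x' | η x' ϑ ≤ η x ϑ}}} := fun θ =>
  one_sub_le_measure_setOf_lt_measure_preimage_Iic (P θ) (fun x => η x θ) α

/-- Coverage: the confidence set `C_α(x) = {θ : π_x(θ) > α}`, obtained by
thresholding the possibility contour `π_x(θ) = P_θ {x' : η(x',θ) ≤ η(x,θ)}`,
has coverage probability at least `1 - α` under every `θ`. -/
theorem im_confidence_coverage {X T : Type*} [MeasurableSpace X]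
    (P : T → Measure X) (hP : ∀ θ, IsProbabilityMeasure (P θ))
    (η : X → T → ℝ) (hη : ∀ x θ, η x θ ∈ Set.Icc (0 : ℝ) 1)
    (hmeas : ∀ θ, Measurable fun x => η x θ)
    (α : ℝ≥0∞) (hα : α ≤ 1) :
    ∀ θ : T,
      1 - α ≤ P θ {x | θ ∈ {ϑ : T | α < P ϑ {x' | η x' ϑ ≤ η x ϑ}}} :=
  im_confidence_coverage_general P hP η α
end

section
/- Let {P_θ^{(m)} : θ ∈ 𝕋, m ∈ 𝕄} be a family of probability measures on a measurable space 𝕏, all indexed by a common parameter θ, and let η : 𝕏 × 𝕋 → [0,1] with x ↦ η(x,θ) measurable for each θ. Define π_x(θ | 𝕄) = sup_{m ∈ 𝕄} P_θ^{(m)}({x' : η(x',θ) ≤ η(x,θ)}), and assume x ↦ π_x(θ | 𝕄) is measurable for each θ. Then for every m ∈ 𝕄, θ ∈ 𝕋 and α ∈ [0,1], P_θ^{(m)}({x : π_x(θ | 𝕄) ≤ α}) ≤ α. -/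
open MeasureTheory
open scoped ENNReal

/-- Validity of the sup-over-models contour
`π_x(θ | 𝕄) = sup_{m ∈ 𝕄} P_θ^{(m)} {x' : η(x',θ) ≤ η(x,θ)}`:
it is superuniform simultaneously under every model `m ∈ 𝕄`. -/
theorem im_validity_over_models {X T M : Type*} [MeasurableSpace X]
    (P : M → T → Measure X) (hP : ∀ m θ, IsProbabilityMeasure (P m θ))
    (η : X → T → ℝ) (hη : ∀ x θ, η x θ ∈ Set.Icc (0 : ℝ) 1)
    (hmeas : ∀ θ, Measurable fun x => η x θ)
    (hπmeas : ∀ θ : T,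
      Measurable fun x => ⨆ m : M, P m θ {x' | η x' θ ≤ η x θ}) :
    ∀ m : M, ∀ θ : T, ∀ α : ℝ≥0∞, α ≤ 1 →
      P m θ {x | (⨆ m' : M, P m' θ {x' | η x' θ ≤ η x θ}) ≤ α} ≤ α := by
  intro m θ α hα
  set μ := P m θ with hμ
  set f := fun x => η x θ with hf
  have hsub : {x | (⨆ m' : M, P m' θ {x' | η x' θ ≤ η x θ}) ≤ α} ⊆
      {x | μ {x' | f x' ≤ f x} ≤ α} := by
    intro x hx
    exact le_trans (le_iSup (fun m' => P m' θ {x' | η x' θ ≤ η x θ}) m) hx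
  refine le_trans (measure_mono hsub) ?_
  set B := {x | μ {x' | f x' ≤ f x} ≤ α} with hB
  rcases Set.eq_empty_or_nonempty B with hBe | hBne
  · simp [hBe]
  · have hbdd : BddAbove (f '' B) := ⟨1, by rintro _ ⟨x, -, rfl⟩; exact (hη x θ).2⟩
    set s := sSup (f '' B) with hs
    by_cases hcase : ∃ y ∈ B, s ≤ f y
    · obtain ⟨y, hyB, hy⟩ := hcase
      have hsub2 : B ⊆ {x' | f x' ≤ f y} := fun x hx =>
        le_trans (le_csSup hbdd ⟨x, hx, rfl⟩) hy
      exact le_trans (measure_mono hsub2) hyB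
    · push_neg at hcase
      have hch : ∀ n : ℕ, ∃ y ∈ B, s - 1 / (n + 1) < f y := by
        intro n
        have hlt : s - 1 / (n + 1 : ℝ) < s := by
          have : (0 : ℝ) < 1 / (n + 1) := by positivity
          linarith
        obtain ⟨t, ht, hlt'⟩ := exists_lt_of_lt_csSup (hBne.image f) hlt
        obtain ⟨y, hyB, rfl⟩ := ht
        exact ⟨y, hyB, hlt'⟩
      choose y hyB hyl using hch
      have hBsub : B ⊆ ⋃ n, {x' | f x' ≤ f (y n)} := by
        intro x hx
        have hxs : f x < s := hcase x hx
        obtain ⟨n, hn⟩ := exists_nat_one_div_lt (sub_pos.mpr hxs)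
        refine Set.mem_iUnion.mpr ⟨n, le_of_lt (lt_of_lt_of_le ?_ (le_of_lt (hyl n)))⟩
        have : (1 : ℝ) / (n + 1) < s - f x := hn
        linarith
      refine le_trans (measure_mono hBsub) ?_
      have hdir : Directed (· ⊆ ·) (fun n => {x' | f x' ≤ f (y n)}) := by
        intro n k
        rcases le_total (f (y n)) (f (y k)) with h | h
        · exact ⟨k, fun x hx => le_trans hx h, fun x hx => hx⟩
        · exact ⟨n, fun x hx => hx, fun x hx => le_trans hx h⟩
      rw [hdir.measure_iUnion]
      exact iSup_le fun n => hyB n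
end

section
/- Let μ be a σ-finite measure on 𝕏, {p_θ} a family of probability densities with respect to μ with p_θ(x) > 0 for μ-a.e. x, Q a probability measure on 𝕋 with mixture density q(x) = ∫ p_ϑ(x) Q(dϑ), P_θ the probability measure with density p_θ, and η_Q(x,θ) = p_θ(x)/q(x). Then for every observed x ∈ 𝕏 and θ ∈ 𝕋, the Q-specific contour satisfies π_x(θ | Q) = P_θ({x' : η_Q(x',θ) ≤ η_Q(x,θ)}) ≤ min(η_Q(x,θ), 1). -/
open MeasureTheory
open scoped ENNReal

/-- The `Q`-specific contour `π_x(θ|Q) = P_θ{x' : η_Q(x',θ) ≤ η_Q(x,θ)}`,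
with `η_Q(x,θ) = p_θ(x)/q(x)` and `q(x) = ∫ p_ϑ(x) Q(dϑ)`, is bounded above
by `min(η_Q(x,θ), 1)`. -/
theorem contour_le_min_evalue_one {X T : Type*} [MeasurableSpace X]
    [MeasurableSpace T]
    (μ : Measure X) [SigmaFinite μ]
    (p : T → X → ℝ≥0∞)
    (hmeas : Measurable fun q : X × T => p q.2 q.1)
    (hdens : ∀ θ, ∫⁻ x, p θ x ∂μ = 1)
    (Q : Measure T) (hQ : IsProbabilityMeasure Q)
    (θ : T) (hpos : ∀ᵐ x ∂μ, 0 < p θ x) (x : X) :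
    μ.withDensity (p θ)
        {x' | p θ x' / (∫⁻ ϑ, p ϑ x' ∂Q) ≤ p θ x / (∫⁻ ϑ, p ϑ x ∂Q)}
      ≤ min (p θ x / (∫⁻ ϑ, p ϑ x ∂Q)) 1 := by
  set q : X → ℝ≥0∞ := fun x' => ∫⁻ ϑ, p ϑ x' ∂Q with hqdef
  set t : ℝ≥0∞ := p θ x / q x with htdef
  have hpθ : Measurable (p θ) := hmeas.comp (measurable_id.prodMk measurable_const)
  have hqmeas : Measurable q := Measurable.lintegral_prod_right' hmeas
  have hηmeas : Measurable fun x' => p θ x' / q x' := hpθ.div hqmeas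
  have hAmeas : MeasurableSet {x' | p θ x' / q x' ≤ t} :=
    hηmeas (measurableSet_Iic (a := t))
  -- total mass bound
  have htotal : μ.withDensity (p θ) {x' | p θ x' / q x' ≤ t} ≤ 1 := by
    calc μ.withDensity (p θ) {x' | p θ x' / q x' ≤ t}
        ≤ μ.withDensity (p θ) Set.univ := measure_mono (Set.subset_univ _)
      _ = 1 := by rw [withDensity_apply _ MeasurableSet.univ, setLIntegral_univ, hdens]
  -- integral of q is 1
  have hqint : ∫⁻ x', q x' ∂μ = 1 := by
    have := lintegral_lintegral_swap (μ := μ) (ν := Q)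
      (f := fun x' ϑ => p ϑ x') hmeas.aemeasurable
    rw [hqdef]
    rw [this]
    simp [hdens]
  rcases le_or_gt 1 t with ht1 | ht1
  · calc μ.withDensity (p θ) {x' | p θ x' / q x' ≤ t} ≤ 1 := htotal
      _ = min t 1 := (min_eq_right ht1).symm
  · rw [min_eq_left ht1.le]
    have hqtop : ∀ᵐ x' ∂μ, q x' < ∞ :=
      ae_lt_top hqmeas (by rw [hqint]; exact ENNReal.one_ne_top)
    have key : ∀ᵐ x' ∂μ, x' ∈ {x' | p θ x' / q x' ≤ t} → p θ x' ≤ t * q x' := by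
      filter_upwards [hpos, hqtop] with x' hp' hq' hx'
      have hle : p θ x' / q x' ≤ t := hx'
      have hq0 : q x' ≠ 0 := by
        intro h0
        rw [h0, ENNReal.div_zero hp'.ne'] at hle
        exact absurd (hle.trans_lt ht1) (by simp)
      exact (ENNReal.div_le_iff hq0 hq'.ne).mp hle
    calc μ.withDensity (p θ) {x' | p θ x' / q x' ≤ t}
        = ∫⁻ x' in {x' | p θ x' / q x' ≤ t}, p θ x' ∂μ :=
          withDensity_apply _ hAmeas
      _ ≤ ∫⁻ x' in {x' | p θ x' / q x' ≤ t}, t * q x' ∂μ := by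
          refine setLIntegral_mono_ae ((hqmeas.const_mul t).aemeasurable) ?_
          exact key
      _ ≤ ∫⁻ x', t * q x' ∂μ := setLIntegral_le_lintegral _ _
      _ = t * ∫⁻ x', q x' ∂μ := lintegral_const_mul t hqmeas
      _ = t := by rw [hqint, mul_one]
end
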